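/- arXiv:1011.0925 — 3 statements merged into one kernel-verified Lean document; each statement's English description precedes it below -/
import Mathlib

section
/- Let U ⊆ ℂ be open with x·(x−1)·(x+1) ≠ 0 for all x ∈ U. Let Ψ : ℂ → ℂ be twice differentiable on U and satisfy x(x−1)(x+1)·Ψ''(x) + (3x²−1)·Ψ'(x) + x·Ψ(x) = 0 for all x ∈ U, and let g : ℂ → ℂ be twice differentiable on U with g(x)² = x(x−1)(x+1) for all x ∈ U. Then ψ := g·Ψ solves ψ'' = Q₁·ψ on U, where Q₁(x) := −(1/4)·(x²+1)²/(x²(x−1)²(x+1)²). -/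
/-!
The equation is in self-adjoint form `(a Ψ')' + c Ψ = 0` with `a = x(x-1)(x+1)` and `c = x`.
For any `g` with `g² = a` we have `a' = 2 g g'`, so in `(g Ψ)'' = g'' Ψ + 2 g' Ψ' + g Ψ''` the
first-order terms cancel against the equation, leaving `(g Ψ)'' = (g''/g - c/a) (g Ψ)`. Expressed
through `a` this is the potential `(2 a a'' - a'² - 4 a c) / (4 a²)`, which for the cubic `a`
and `c = x` is `-(x² + 1)² / (4 a²)`.
-/

open Complex

/-- `f` solves the equation `ψ'' = Q·ψ` on the open set `U`. -/
def SolvesOn (Q f : ℂ → ℂ) (U : Set ℂ) : Prop :=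
  (∀ x ∈ U, DifferentiableAt ℂ f x) ∧ (∀ x ∈ U, DifferentiableAt ℂ (deriv f) x) ∧
    ∀ x ∈ U, deriv (deriv f) x = Q x * f x

open Set

theorem SolvesOn.congr {Q Q' f : ℂ → ℂ} {U : Set ℂ} (h : SolvesOn Q f U) (hQ : EqOn Q Q' U) :
    SolvesOn Q' f U :=
  ⟨h.1, h.2.1, fun x hx => hQ hx ▸ h.2.2 x hx⟩

section OnOpen

variable {𝕜 : Type*} [NontriviallyNormedField 𝕜] {U : Set 𝕜} {f h g a : 𝕜 → 𝕜}

theorem eqOn_deriv_mul (hf : ∀ x ∈ U, DifferentiableAt 𝕜 f x)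
    (hh : ∀ x ∈ U, DifferentiableAt 𝕜 h x) :
    EqOn (deriv fun y => f y * h y) (fun y => deriv f y * h y + f y * deriv h y) U :=
  fun x hx => deriv_fun_mul (hf x hx) (hh x hx)

theorem differentiableAt_deriv_mul (hU : IsOpen U) (hf : ∀ x ∈ U, DifferentiableAt 𝕜 f x)
    (hf' : ∀ x ∈ U, DifferentiableAt 𝕜 (deriv f) x) (hh : ∀ x ∈ U, DifferentiableAt 𝕜 h x)
    (hh' : ∀ x ∈ U, DifferentiableAt 𝕜 (deriv h) x) {x : 𝕜} (hx : x ∈ U) :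
    DifferentiableAt 𝕜 (deriv fun y => f y * h y) x :=
  ((eqOn_deriv_mul hf hh).eventuallyEq_of_mem (hU.mem_nhds hx)).differentiableAt_iff.mpr
    (((hf' x hx).mul (hh x hx)).add ((hf x hx).mul (hh' x hx)))

theorem deriv_deriv_mul (hU : IsOpen U) (hf : ∀ x ∈ U, DifferentiableAt 𝕜 f x)
    (hf' : ∀ x ∈ U, DifferentiableAt 𝕜 (deriv f) x) (hh : ∀ x ∈ U, DifferentiableAt 𝕜 h x)
    (hh' : ∀ x ∈ U, DifferentiableAt 𝕜 (deriv h) x) {x : 𝕜} (hx : x ∈ U) :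
    deriv (deriv fun y => f y * h y) x =
      deriv (deriv f) x * h x + 2 * deriv f x * deriv h x + f x * deriv (deriv h) x := by
  rw [(eqOn_deriv_mul hf hh).deriv hU hx,
    ((((hf' x hx).hasDerivAt.fun_mul (hh x hx).hasDerivAt).fun_add
      ((hf x hx).hasDerivAt.fun_mul (hh' x hx).hasDerivAt))).deriv]
  ring

theorem eqOn_deriv_of_sq_eqOn (hU : IsOpen U) (hg : ∀ x ∈ U, DifferentiableAt 𝕜 g x)
    (hga : ∀ x ∈ U, g x ^ 2 = a x) :
    EqOn (deriv a) (fun x => 2 * g x * deriv g x) U := by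
  intro x hx
  have hsq : EqOn (fun y => g y ^ 2) a U := fun y hy => hga y hy
  rw [← hsq.deriv hU hx, ((hg x hx).hasDerivAt.fun_pow 2).deriv]
  push_cast
  ring

theorem eqOn_deriv_deriv_of_sq_eqOn (hU : IsOpen U) (hg : ∀ x ∈ U, DifferentiableAt 𝕜 g x)
    (hg' : ∀ x ∈ U, DifferentiableAt 𝕜 (deriv g) x) (hga : ∀ x ∈ U, g x ^ 2 = a x) :
    EqOn (deriv (deriv a)) (fun x => 2 * deriv g x ^ 2 + 2 * g x * deriv (deriv g) x) U := by
  intro x hx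
  rw [(eqOn_deriv_of_sq_eqOn hU hg hga).deriv hU hx,
    (((hg x hx).hasDerivAt.const_mul 2).fun_mul (hg' x hx).hasDerivAt).deriv]
  ring

end OnOpen

theorem solvesOn_mul_of_sq_eq {U : Set ℂ} (hU : IsOpen U) {a c g Ψ : ℂ → ℂ}
    (ha : ∀ x ∈ U, a x ≠ 0)
    (hΨ1 : ∀ x ∈ U, DifferentiableAt ℂ Ψ x) (hΨ2 : ∀ x ∈ U, DifferentiableAt ℂ (deriv Ψ) x)
    (hg1 : ∀ x ∈ U, DifferentiableAt ℂ g x) (hg2 : ∀ x ∈ U, DifferentiableAt ℂ (deriv g) x)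
    (hga : ∀ x ∈ U, g x ^ 2 = a x)
    (hode : ∀ x ∈ U, a x * deriv (deriv Ψ) x + deriv a x * deriv Ψ x + c x * Ψ x = 0) :
    SolvesOn
      (fun x => (2 * a x * deriv (deriv a) x - deriv a x ^ 2 - 4 * a x * c x) / (4 * a x ^ 2))
      (fun x => g x * Ψ x) U := by
  refine ⟨fun x hx => (hg1 x hx).mul (hΨ1 x hx),
    fun x hx => differentiableAt_deriv_mul hU hg1 hg2 hΨ1 hΨ2 hx, fun x hx => ?_⟩
  have hg0 : g x ≠ 0 := fun h0 => ha x hx (by rw [← hga x hx, h0]; ring)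
  have hode' := hode x hx
  rw [eqOn_deriv_of_sq_eqOn hU hg1 hga hx, ← hga x hx] at hode'
  dsimp only at hode' ⊢
  rw [deriv_deriv_mul hU hg1 hg2 hΨ1 hΨ2 hx, eqOn_deriv_deriv_of_sq_eqOn hU hg1 hg2 hga hx,
    eqOn_deriv_of_sq_eqOn hU hg1 hga hx, ← hga x hx, div_mul_eq_mul_div,
    eq_div_iff (by simpa using hg0)]
  linear_combination (4 * g x ^ 3) * hode'

theorem deriv_cubic : deriv (fun x : ℂ => x * (x - 1) * (x + 1)) = fun x => 3 * x ^ 2 - 1 := by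
  funext x
  rw [(((hasDerivAt_id' x).fun_mul ((hasDerivAt_id' x).sub_const 1)).fun_mul
    ((hasDerivAt_id' x).add_const 1)).deriv]
  ring

theorem deriv_deriv_cubic : deriv (deriv fun x : ℂ => x * (x - 1) * (x + 1)) = fun x => 6 * x := by
  funext x
  rw [deriv_cubic, (((hasDerivAt_pow 2 x).const_mul 3).sub_const 1).deriv]
  push_cast
  ring

theorem chudnovsky_one_normal_form
    (U : Set ℂ) (hU : IsOpen U)
    (hUne : ∀ x ∈ U, x * (x - 1) * (x + 1) ≠ 0)
    (Ψ g : ℂ → ℂ)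
    (hΨ1 : ∀ x ∈ U, DifferentiableAt ℂ Ψ x)
    (hΨ2 : ∀ x ∈ U, DifferentiableAt ℂ (deriv Ψ) x)
    (hode : ∀ x ∈ U, x * (x - 1) * (x + 1) * deriv (deriv Ψ) x
      + (3 * x ^ 2 - 1) * deriv Ψ x + x * Ψ x = 0)
    (hg1 : ∀ x ∈ U, DifferentiableAt ℂ g x)
    (hg2 : ∀ x ∈ U, DifferentiableAt ℂ (deriv g) x)
    (hgsq : ∀ x ∈ U, g x ^ 2 = x * (x - 1) * (x + 1)) :
    SolvesOn (fun x => -(1 / 4) * (x ^ 2 + 1) ^ 2 / (x ^ 2 * (x - 1) ^ 2 * (x + 1) ^ 2))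
      (fun x => g x * Ψ x) U := by
  have hselfAdjoint := solvesOn_mul_of_sq_eq (a := fun x => x * (x - 1) * (x + 1)) (c := id)
    hU hUne hΨ1 hΨ2 hg1 hg2 hgsq (by simpa only [deriv_cubic, id] using hode)
  refine hselfAdjoint.congr fun x hx => ?_
  have hcubic := hUne x hx
  dsimp only
  rw [deriv_deriv_cubic, deriv_cubic, id]
  field_simp
  ring
end

section
/- Let U ⊆ ℂ be open with x·(x²+11x−1) ≠ 0 for all x ∈ U. Let Ψ : ℂ → ℂ be twice differentiable on U and satisfy x(x²+11x−1)·Ψ''(x) + (3x²+22x−1)·Ψ'(x) + (x+3)·Ψ(x) = 0 for all x ∈ U, and let g : ℂ → ℂ be twice differentiable on U with g(x)² = x(x²+11x−1) for all x ∈ U. Then ψ := g·Ψ solves ψ'' = Q₄·ψ on U, where Q₄(x) := −(1/4)·(x⁴+12x³+134x²−12x+1)/(x²(x²+11x−1)²). -/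
open Complex

/-!
Liouville's transformation: if `g² = p`, then `ψ = gΨ` turns the self-adjoint equation
`(pΨ')' + rΨ = 0` into `ψ'' = Qψ` with `Q = (2pp'' - p'² - 4pr) / (4p²)`. Indeed `p' = 2gg'` and
`p'' = 2(g'² + gg'')` give `Q = g''/g - r/g²`, and then `ψ'' - Qψ = ((pΨ')' + rΨ) / g`.
Holomorphy on the open set `U` supplies all the second derivatives.
The fourth Chudnovsky equation is self-adjoint with `p = x(x² + 11x - 1)` and `r = x + 3`, and for
these `2pp'' - p'² - 4pr = -(x⁴ + 12x³ + 134x² - 12x + 1)`.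
-/

open Filter Topology

section LiouvilleNormalForm

variable {U : Set ℂ} {f g p r Ψ : ℂ → ℂ} {x : ℂ}

theorem deriv_deriv_mul_of_isOpen (hU : IsOpen U) (hf : DifferentiableOn ℂ f U)
    (hg : DifferentiableOn ℂ g U) (hx : x ∈ U) :
    deriv (deriv fun y => f y * g y) x =
      deriv (deriv f) x * g x + 2 * (deriv f x * deriv g x) + f x * deriv (deriv g) x := by
  have hf' y (hy : y ∈ U) := hf.differentiableAt (hU.mem_nhds hy)
  have hg' y (hy : y ∈ U) := hg.differentiableAt (hU.mem_nhds hy)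
  have hderiv : (deriv fun y => f y * g y) =ᶠ[𝓝 x] fun y => deriv f y * g y + f y * deriv g y :=
    eventually_of_mem (hU.mem_nhds hx) fun y hy => deriv_mul (hf' y hy) (hg' y hy)
  have hf'' := (hf.deriv hU).differentiableAt (hU.mem_nhds hx)
  have hg'' := (hg.deriv hU).differentiableAt (hU.mem_nhds hx)
  have h : HasDerivAt (fun y => deriv f y * g y + f y * deriv g y)
      (deriv (deriv f) x * g x + deriv f x * deriv g x +
        (deriv f x * deriv g x + f x * deriv (deriv g) x)) x :=
    (hf''.hasDerivAt.mul (hg' x hx).hasDerivAt).add ((hf' x hx).hasDerivAt.mul hg''.hasDerivAt)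
  rw [hderiv.deriv_eq, h.deriv]
  ring

theorem eventuallyEq_mul_self_of_sq_eq (hU : IsOpen U) (hgsq : ∀ y ∈ U, g y ^ 2 = p y)
    (hx : x ∈ U) : p =ᶠ[𝓝 x] fun y => g y * g y :=
  eventually_of_mem (hU.mem_nhds hx) fun y hy => by rw [← hgsq y hy, sq]

theorem deriv_eq_of_sq_eq (hU : IsOpen U) (hg : DifferentiableOn ℂ g U)
    (hgsq : ∀ y ∈ U, g y ^ 2 = p y) (hx : x ∈ U) :
    deriv p x = 2 * (g x * deriv g x) := by
  have hg' := hg.differentiableAt (hU.mem_nhds hx)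
  rw [(eventuallyEq_mul_self_of_sq_eq hU hgsq hx).deriv_eq, deriv_fun_mul hg' hg']
  ring

theorem deriv_deriv_eq_of_sq_eq (hU : IsOpen U) (hg : DifferentiableOn ℂ g U)
    (hgsq : ∀ y ∈ U, g y ^ 2 = p y) (hx : x ∈ U) :
    deriv (deriv p) x = 2 * (deriv g x ^ 2 + g x * deriv (deriv g) x) := by
  rw [(eventuallyEq_mul_self_of_sq_eq hU hgsq hx).deriv.deriv_eq,
    deriv_deriv_mul_of_isOpen hU hg hg hx]
  ring

theorem solvesOn_liouville_normal_form (hU : IsOpen U) (hp : ∀ x ∈ U, p x ≠ 0)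
    (hg : DifferentiableOn ℂ g U) (hgsq : ∀ x ∈ U, g x ^ 2 = p x)
    (hΨ : DifferentiableOn ℂ Ψ U)
    (hode : ∀ x ∈ U, p x * deriv (deriv Ψ) x + deriv p x * deriv Ψ x + r x * Ψ x = 0) :
    SolvesOn (fun x => (2 * p x * deriv (deriv p) x - deriv p x ^ 2 - 4 * p x * r x) / (4 * p x ^ 2))
      (fun x => g x * Ψ x) U := by
  have hgΨ : DifferentiableOn ℂ (fun x => g x * Ψ x) U := hg.mul hΨ
  refine ⟨fun x hx => hgΨ.differentiableAt (hU.mem_nhds hx),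
    fun x hx => (hgΨ.deriv hU).differentiableAt (hU.mem_nhds hx), fun x hx => ?_⟩
  have hg0 : g x ≠ 0 := fun h => hp x hx (by rw [← hgsq x hx, h, zero_pow two_ne_zero])
  have hode' := hode x hx
  rw [deriv_eq_of_sq_eq hU hg hgsq hx, ← hgsq x hx] at hode'
  beta_reduce
  rw [deriv_deriv_mul_of_isOpen hU hg hΨ hx, deriv_deriv_eq_of_sq_eq hU hg hgsq hx,
    deriv_eq_of_sq_eq hU hg hgsq hx, ← hgsq x hx]
  field_simp
  linear_combination 4 * hode'

end LiouvilleNormalForm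

theorem chudnovsky_four_normal_form_general
    (U : Set ℂ) (hU : IsOpen U)
    (hUne : ∀ x ∈ U, x * (x ^ 2 + 11 * x - 1) ≠ 0)
    (Ψ g : ℂ → ℂ)
    (hΨ1 : ∀ x ∈ U, DifferentiableAt ℂ Ψ x)
    (hode : ∀ x ∈ U, x * (x ^ 2 + 11 * x - 1) * deriv (deriv Ψ) x
      + (3 * x ^ 2 + 22 * x - 1) * deriv Ψ x + (x + 3) * Ψ x = 0)
    (hg1 : ∀ x ∈ U, DifferentiableAt ℂ g x)
    (hgsq : ∀ x ∈ U, g x ^ 2 = x * (x ^ 2 + 11 * x - 1)) :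
    SolvesOn (fun x => -(1 / 4) * (x ^ 4 + 12 * x ^ 3 + 134 * x ^ 2 - 12 * x + 1)
        / (x ^ 2 * (x ^ 2 + 11 * x - 1) ^ 2))
      (fun x => g x * Ψ x) U := by
  have hp' : (deriv fun x : ℂ => x * (x ^ 2 + 11 * x - 1)) = fun x => 3 * x ^ 2 + 22 * x - 1 := by
    funext x
    have h : HasDerivAt (fun x : ℂ => x * (x ^ 2 + 11 * x - 1))
        (1 * (x ^ 2 + 11 * x - 1) + x * (2 * x ^ 1 + 11 * 1)) x :=
      (hasDerivAt_id x).mul (((hasDerivAt_pow 2 x).add ((hasDerivAt_id x).const_mul 11)).sub_const 1)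
    rw [h.deriv]
    ring
  have hp'' : (deriv fun x : ℂ => 3 * x ^ 2 + 22 * x - 1) = fun x => 6 * x + 22 := by
    funext x
    have h : HasDerivAt (fun x : ℂ => 3 * x ^ 2 + 22 * x - 1) (3 * (2 * x ^ 1) + 22 * 1) x :=
      (((hasDerivAt_pow 2 x).const_mul 3).add ((hasDerivAt_id x).const_mul 22)).sub_const 1
    rw [h.deriv]
    ring
  have key := solvesOn_liouville_normal_form (r := fun x => x + 3) hU hUne
    (fun x hx => (hg1 x hx).differentiableWithinAt) hgsq
    (fun x hx => (hΨ1 x hx).differentiableWithinAt) (by simpa only [hp'] using hode)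
  convert key using 2 with x
  simp only [hp', hp'', mul_pow, ← div_div]
  ring

theorem chudnovsky_four_normal_form
    (U : Set ℂ) (hU : IsOpen U)
    (hUne : ∀ x ∈ U, x * (x ^ 2 + 11 * x - 1) ≠ 0)
    (Ψ g : ℂ → ℂ)
    (hΨ1 : ∀ x ∈ U, DifferentiableAt ℂ Ψ x)
    (hΨ2 : ∀ x ∈ U, DifferentiableAt ℂ (deriv Ψ) x)
    (hode : ∀ x ∈ U, x * (x ^ 2 + 11 * x - 1) * deriv (deriv Ψ) x
      + (3 * x ^ 2 + 22 * x - 1) * deriv Ψ x + (x + 3) * Ψ x = 0)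
    (hg1 : ∀ x ∈ U, DifferentiableAt ℂ g x)
    (hg2 : ∀ x ∈ U, DifferentiableAt ℂ (deriv g) x)
    (hgsq : ∀ x ∈ U, g x ^ 2 = x * (x ^ 2 + 11 * x - 1)) :
    SolvesOn (fun x => -(1 / 4) * (x ^ 4 + 12 * x ^ 3 + 134 * x ^ 2 - 12 * x + 1)
        / (x ^ 2 * (x ^ 2 + 11 * x - 1) ^ 2))
      (fun x => g x * Ψ x) U :=
  chudnovsky_four_normal_form_general U hU hUne Ψ g hΨ1 hode hg1 hgsq
end

section
/- Let U ⊆ ℂ be open with T·(T⁴−1) ≠ 0 for all T ∈ U, let V ⊆ ℂ be open with T² ∈ V and T²·((T²)²−1) ≠ 0 for all T ∈ U, let ψ solve ψ'' = Q₁·ψ on V, and let g : ℂ → ℂ be twice differentiable and nonvanishing on U with g(T)² = 2T for all T ∈ U. Then Φ(T) := ψ(T²)/g(T) solves Φ''(T) = −(1/4)·(T⁸+14T⁴+1)/(T²(T⁴−1)²)·Φ(T) on U. -/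
/-!
Substituting `x = u(T)` in `ψ'' = Q ψ` and dividing by a square root `g` of `u'` removes the
first-order term: `Φ = ψ(u) / g` satisfies `Φ'' = (Q(u) u'² - g''/g + 2 (g'/g)²) Φ`, the correction
being `-½` times the Schwarzian derivative of `u`. For `u = T²` and `g² = 2T` one has `g' = 1/g`,
so the correction is `3 / g⁴ = 3 / (4T²)`, and `4T² Q₁(T²) + 3 / (4T²)` is the stated coefficient.
-/

open Complex

/-- The coefficient of the normal form (1') of the first Chudnovsky equation. -/
noncomputable def Q₁ (x : ℂ) : ℂ :=
  -(1 / 4) * (x ^ 2 + 1) ^ 2 / (x ^ 2 * (x - 1) ^ 2 * (x + 1) ^ 2)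

open Filter Topology

theorem SolvesOn.congr_coeff {Q Q' f : ℂ → ℂ} {U : Set ℂ} (hf : SolvesOn Q f U)
    (hQ : ∀ x ∈ U, Q x = Q' x) : SolvesOn Q' f U :=
  ⟨hf.1, hf.2.1, fun x hx => hQ x hx ▸ hf.2.2 x hx⟩

theorem solvesOn_of_hasDerivAt {Q f f' : ℂ → ℂ} {U : Set ℂ} (hU : IsOpen U)
    (hf : ∀ x ∈ U, HasDerivAt f (f' x) x) (hf' : ∀ x ∈ U, HasDerivAt f' (Q x * f x) x) :
    SolvesOn Q f U := by
  have hderiv : ∀ x ∈ U, deriv f =ᶠ[𝓝 x] f' := fun x hx =>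
    eventuallyEq_of_mem (hU.mem_nhds hx) fun y hy => (hf y hy).deriv
  refine ⟨fun x hx => (hf x hx).differentiableAt, fun x hx => ?_, fun x hx => ?_⟩
  · exact (hf' x hx).differentiableAt.congr_of_eventuallyEq (hderiv x hx)
  · rw [(hderiv x hx).deriv_eq, (hf' x hx).deriv]

theorem SolvesOn.comp_div_sqrt_deriv {Q ψ u g g' g'' : ℂ → ℂ} {U V : Set ℂ} (hU : IsOpen U)
    (hψ : SolvesOn Q ψ V) (huV : ∀ T ∈ U, u T ∈ V) (hu : ∀ T ∈ U, HasDerivAt u (g T ^ 2) T)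
    (hg : ∀ T ∈ U, HasDerivAt g (g' T) T) (hg' : ∀ T ∈ U, HasDerivAt g' (g'' T) T)
    (hg0 : ∀ T ∈ U, g T ≠ 0) :
    SolvesOn (fun T => Q (u T) * g T ^ 4 - g'' T / g T + 2 * (g' T / g T) ^ 2)
      (fun T => ψ (u T) / g T) U := by
  obtain ⟨hψ1, hψ2, hψ3⟩ := hψ
  have hψu : ∀ T ∈ U, HasDerivAt (fun T => ψ (u T)) (deriv ψ (u T) * g T ^ 2) T :=
    fun T hT => (hψ1 _ (huV T hT)).hasDerivAt.comp T (hu T hT)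
  have hψ'u : ∀ T ∈ U,
      HasDerivAt (fun T => deriv ψ (u T)) (deriv (deriv ψ) (u T) * g T ^ 2) T :=
    fun T hT => (hψ2 _ (huV T hT)).hasDerivAt.comp T (hu T hT)
  refine solvesOn_of_hasDerivAt hU
    (f' := fun T => deriv ψ (u T) * g T - ψ (u T) * g' T / g T ^ 2) (fun T hT => ?_) fun T hT => ?_
  · refine ((hψu T hT).div (hg T hT) (hg0 T hT)).congr_deriv ?_
    field_simp [hg0 T hT]
  · have hg_sq : HasDerivAt (fun T => g T ^ 2) (2 * g T * g' T) T := by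
      simpa using (hg T hT).fun_pow 2
    refine (((hψ'u T hT).fun_mul (hg T hT)).sub
      (((hψu T hT).fun_mul (hg' T hT)).div hg_sq (pow_ne_zero 2 (hg0 T hT)))).congr_deriv ?_
    rw [hψ3 _ (huV T hT)]
    field_simp [hg0 T hT]
    ring

theorem Q₁_sq_mul_two_mul_sq_add (T : ℂ) (hT : T * (T ^ 4 - 1) ≠ 0) :
    Q₁ (T ^ 2) * (2 * T) ^ 2 + 3 / (2 * T) ^ 2 =
      -(1 / 4) * (T ^ 8 + 14 * T ^ 4 + 1) / (T ^ 2 * (T ^ 4 - 1) ^ 2) := by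
  obtain ⟨hT0, hT4⟩ := mul_ne_zero_iff.mp hT
  have hden : (T ^ 2) ^ 2 * (T ^ 2 - 1) ^ 2 * (T ^ 2 + 1) ^ 2 = T ^ 4 * (T ^ 4 - 1) ^ 2 := by ring
  rw [Q₁, hden]
  field_simp
  ring

theorem hasDerivAt_inv_of_sq_eq_two_mul {g : ℂ → ℂ} {T : ℂ} (hg : DifferentiableAt ℂ g T)
    (hgsq : ∀ᶠ x in 𝓝 T, g x ^ 2 = 2 * x) : HasDerivAt g (g T)⁻¹ T := by
  have hg_sq : HasDerivAt (fun x => g x ^ 2) (2 * g T * deriv g T) T := by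
    simpa using hg.hasDerivAt.fun_pow 2
  have hg_sq' : HasDerivAt (fun x => g x ^ 2) 2 T :=
    (((hasDerivAt_id T).const_mul 2).congr_of_eventuallyEq hgsq).congr_deriv (mul_one 2)
  have hg_mul_deriv : g T * deriv g T = 1 := by
    linear_combination hg_sq.unique hg_sq' / 2
  rw [← eq_inv_of_mul_eq_one_right hg_mul_deriv]
  exact hg.hasDerivAt

theorem chudnovsky_one_square_substitution_general
    (U V : Set ℂ) (hU : IsOpen U)
    (hUne : ∀ T ∈ U, T * (T ^ 4 - 1) ≠ 0)
    (hTV : ∀ T ∈ U, T ^ 2 ∈ V)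
    (ψ g : ℂ → ℂ)
    (hψ : SolvesOn Q₁ ψ V)
    (hg1 : ∀ T ∈ U, DifferentiableAt ℂ g T)
    (hgne : ∀ T ∈ U, g T ≠ 0)
    (hgsq : ∀ T ∈ U, g T ^ 2 = 2 * T) :
    SolvesOn (fun T => -(1 / 4) * (T ^ 8 + 14 * T ^ 4 + 1) / (T ^ 2 * (T ^ 4 - 1) ^ 2))
      (fun T => ψ (T ^ 2) / g T) U := by
  have hsq : ∀ T ∈ U, HasDerivAt (fun T => T ^ 2) (g T ^ 2) T := fun T hT => by
    simpa [hgsq T hT] using hasDerivAt_pow 2 T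
  have hg : ∀ T ∈ U, HasDerivAt g (g T)⁻¹ T := fun T hT =>
    hasDerivAt_inv_of_sq_eq_two_mul (hg1 T hT) (eventually_of_mem (hU.mem_nhds hT) hgsq)
  refine (hψ.comp_div_sqrt_deriv hU hTV hsq hg (fun T hT => (hg T hT).inv (hgne T hT))
    hgne).congr_coeff fun T hT => ?_
  rw [← Q₁_sq_mul_two_mul_sq_add T (hUne T hT), ← hgsq T hT]
  field_simp [hgne T hT]
  ring

theorem chudnovsky_one_square_substitution
    (U V : Set ℂ) (hU : IsOpen U) (hV : IsOpen V)
    (hUne : ∀ T ∈ U, T * (T ^ 4 - 1) ≠ 0)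
    (hTV : ∀ T ∈ U, T ^ 2 ∈ V)
    (hVne : ∀ T ∈ U, T ^ 2 * ((T ^ 2) ^ 2 - 1) ≠ 0)
    (ψ g : ℂ → ℂ)
    (hψ : SolvesOn Q₁ ψ V)
    (hg1 : ∀ T ∈ U, DifferentiableAt ℂ g T)
    (hg2 : ∀ T ∈ U, DifferentiableAt ℂ (deriv g) T)
    (hgne : ∀ T ∈ U, g T ≠ 0)
    (hgsq : ∀ T ∈ U, g T ^ 2 = 2 * T) :
    SolvesOn (fun T => -(1 / 4) * (T ^ 8 + 14 * T ^ 4 + 1) / (T ^ 2 * (T ^ 4 - 1) ^ 2))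
      (fun T => ψ (T ^ 2) / g T) U :=
  chudnovsky_one_square_substitution_general U V hU hUne hTV ψ g hψ hg1 hgne hgsq
end
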